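/- arXiv:2110.08806 — 2 statements merged into one kernel-verified Lean document; each statement's English description precedes it below -/
import Mathlib

section
/- Let m ≥ 1, and let B₂ be a real (k−m−1)×(m−1) matrix and B₃ a real skew-symmetric (m−1)×(m−1) matrix satisfying B₃² − B₂ᵀB₂ = b₄·I for some real b₄. Let b₁ > 0, b₂, b₃ be reals with b₁b₂ − b₃² + b₄ = 1/2. Then the symmetric block matrix B = [[ (1/2)I_{k−m−1}, 0, B₂ ], [0, b₁ I_{m−1}, b₃ I_{m−1} + B₃], [B₂ᵀ, b₃ I_{m−1} − B₃, b₂ I_{m−1}]] has determinant det(B) = (1/2)^{k−2} det(I_{m−1} + 2(1 − 2b₁) B₂ᵀB₂). -/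
open Matrix

/-- Block determinant computation from the proof of positive definiteness of the
Hessian of the Busemann function on Damek–Ricci spaces. Here `p = k − m − 1` and
`q = m − 1` (so the exponent `k − 2 = p + q`). -/
theorem stmt_17 (p q : ℕ)
    (B₂ : Matrix (Fin p) (Fin q) ℝ) (B₃ : Matrix (Fin q) (Fin q) ℝ)
    (hB₃ : B₃ᵀ = -B₃)
    (b₁ b₂ b₃ b₄ : ℝ)
    (hcomm : B₃ * B₃ - B₂ᵀ * B₂ = b₄ • (1 : Matrix (Fin q) (Fin q) ℝ))
    (hb₁ : 0 < b₁) (hb : b₁ * b₂ - b₃ ^ 2 + b₄ = 1 / 2) :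
    ∀ B : Matrix (Fin p ⊕ (Fin q ⊕ Fin q)) (Fin p ⊕ (Fin q ⊕ Fin q)) ℝ,
      B = fromBlocks ((1 / 2 : ℝ) • 1) (fromCols 0 B₂) (fromRows 0 B₂ᵀ)
            (fromBlocks (b₁ • 1) (b₃ • 1 + B₃) (b₃ • 1 - B₃) (b₂ • 1)) →
      B.det = (1 / 2 : ℝ) ^ (p + q) *
        ((1 : Matrix (Fin q) (Fin q) ℝ) + (2 * (1 - 2 * b₁)) • (B₂ᵀ * B₂)).det := by
  intro B hB
  subst hB
  have hb₁' : b₁ ≠ 0 := ne_of_gt hb₁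
  set M : Matrix (Fin q) (Fin q) ℝ := B₂ᵀ * B₂ with hM
  -- Invertible top-left blocks
  have hA1 : ((1 / 2 : ℝ) • (1 : Matrix (Fin p) (Fin p) ℝ)) * ((2 : ℝ) • 1) = 1 := by
    rw [smul_mul_smul_comm, one_mul]
    norm_num
  have hA1' : ((2 : ℝ) • (1 : Matrix (Fin p) (Fin p) ℝ)) * ((1 / 2 : ℝ) • 1) = 1 := by
    rw [smul_mul_smul_comm, one_mul]
    norm_num
  letI : Invertible ((1 / 2 : ℝ) • (1 : Matrix (Fin p) (Fin p) ℝ)) := ⟨(2 : ℝ) • 1, hA1', hA1⟩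
  have hinv1 : ⅟ ((1 / 2 : ℝ) • (1 : Matrix (Fin p) (Fin p) ℝ)) = (2 : ℝ) • 1 := rfl
  have hAq : ((b₁ : ℝ) • (1 : Matrix (Fin q) (Fin q) ℝ)) * (b₁⁻¹ • 1) = 1 := by
    rw [smul_mul_smul_comm, one_mul, mul_inv_cancel₀ hb₁', one_smul]
  have hAq' : ((b₁⁻¹ : ℝ) • (1 : Matrix (Fin q) (Fin q) ℝ)) * (b₁ • 1) = 1 := by
    rw [smul_mul_smul_comm, one_mul, inv_mul_cancel₀ hb₁', one_smul]
  letI : Invertible ((b₁ : ℝ) • (1 : Matrix (Fin q) (Fin q) ℝ)) := ⟨b₁⁻¹ • 1, hAq', hAq⟩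
  have hinvq : ⅟ ((b₁ : ℝ) • (1 : Matrix (Fin q) (Fin q) ℝ)) = b₁⁻¹ • 1 := rfl
  rw [det_fromBlocks₁₁, hinv1]
  -- Schur complement of the first block
  have hS : fromBlocks (b₁ • 1) (b₃ • 1 + B₃) (b₃ • 1 - B₃) (b₂ • (1 : Matrix (Fin q) (Fin q) ℝ))
      - fromRows 0 B₂ᵀ * ((2 : ℝ) • (1 : Matrix (Fin p) (Fin p) ℝ)) * fromCols 0 B₂
      = fromBlocks (b₁ • 1) (b₃ • 1 + B₃) (b₃ • 1 - B₃) (b₂ • 1 - (2 : ℝ) • M) := by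
    rw [Matrix.mul_smul, Matrix.mul_one, Matrix.smul_mul, fromRows_mul_fromCols]
    ext (i | i) (j | j) <;>
      simp [Matrix.sub_apply, Matrix.smul_apply, hM]
  rw [hS, det_fromBlocks₁₁, hinvq]
  -- inner Schur complement
  have hB3sq : B₃ * B₃ = b₄ • 1 + M := by
    rw [← hcomm]; rw [sub_add_cancel]
  have hkey : (b₂ • 1 - (2 : ℝ) • M) - (b₃ • 1 - B₃) * (b₁⁻¹ • 1) * (b₃ • 1 + B₃)
      = (1 / (2 * b₁)) • ((1 : Matrix (Fin q) (Fin q) ℝ) + (2 * (1 - 2 * b₁)) • M) := by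
    have hprod : (b₃ • (1 : Matrix (Fin q) (Fin q) ℝ) - B₃) * (b₃ • 1 + B₃)
        = (b₃ ^ 2 - b₄) • 1 - M := by
      simp only [sub_mul, mul_add, smul_mul_assoc, Matrix.mul_smul, Matrix.one_mul,
        Matrix.mul_one, hB3sq, smul_smul, pow_two, smul_add, sub_smul]
      abel
    rw [Matrix.mul_smul, Matrix.mul_one, Matrix.smul_mul, hprod]
    rw [smul_sub, smul_smul]
    have c1 : b₁⁻¹ * (b₃ ^ 2 - b₄) = b₂ - 1 / (2 * b₁) := by
      field_simp
      nlinarith [hb]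
    have c2 : (1 / (2 * b₁)) * (2 * (1 - 2 * b₁)) = b₁⁻¹ - 2 := by
      field_simp
    rw [c1, smul_add, smul_smul, c2]
    module
  rw [hkey]
  -- determinants of scalar matrices
  simp only [Matrix.det_smul, Matrix.det_one, Fintype.card_fin, mul_one]
  have h2b : b₁ ^ q * (1 / (2 * b₁)) ^ q = (1 / 2 : ℝ) ^ q := by
    rw [← mul_pow]
    congr 1
    field_simp
  rw [pow_add, ← h2b]
  ring
end

section
/- Let v and z be real inner product spaces with a bilinear bracket [·,·] : v × v → z and maps J_Z : v → v satisfying ⟨J_Z U, W⟩ = ⟨Z, [U,W]⟩ and the generalized Heisenberg identities. Fix nonzero V ∈ v and Y ∈ z, and an orthonormal basis {e_{k+r}} of z. For each r write J_{e_{k+r}} J_Y V = V_r + J_{Y_r} V with V_r ∈ ker(ad(V)) and Y_r ∈ z (using the orthogonal decomposition v = ker(ad(V)) ⊕ J_z V). Then |V|²|Y|² δ_{rl} = ⟨V_r, V_l⟩ + |V|²⟨Y_r, Y_l⟩ for all r, l; consequently the Gram matrix (⟨V_r, V_l⟩) is positive semidefinite with all eigenvalues in [0, |V|²|Y|²]. 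-/
open scoped RealInnerProductSpace

/-!
Since `J_Z` is skew and squares to `-|Z|²`, we get `|J_Z U| = |Z| |U|`, and polarizing in `Z`
gives `⟪J_Z U, J_W U⟫ = ⟪Z, W⟫ |U|²`. Applied to `U = J_Y V` and the orthonormal `e`, the
vectors `J_{e r} J_Y V` have Gram matrix `|V|²|Y|² · 1`. On the other side, `⟪J_Z V, U⟫ = ⟪Z, [V, U]⟫`
vanishes for `U ∈ ker (ad V)`, so the decomposition `V_r + J_{Y_r} V` is orthogonal and that Gram
matrix splits as `(⟪V_r, V_l⟫) + |V|² (⟪Y_r, Y_l⟫)`. Both summands are Gram matrices, hence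
positive semidefinite.
-/

section GeneralizedHeisenberg

variable {v z : Type*} [NormedAddCommGroup v] [InnerProductSpace ℝ v]
  [NormedAddCommGroup z] [InnerProductSpace ℝ z]
  {br : v →ₗ[ℝ] v →ₗ[ℝ] z} {J : z →ₗ[ℝ] v →ₗ[ℝ] v}

theorem inner_J_apply_eq_zero_of_mem_ker (hJ : ∀ (Z : z) (U W : v), ⟪J Z U, W⟫ = ⟪Z, br U W⟫)
    (Z : z) {V U : v} (hU : U ∈ LinearMap.ker (br V)) : ⟪J Z V, U⟫ = 0 := by
  rw [hJ, LinearMap.mem_ker.mp hU, inner_zero_right]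

theorem inner_J_apply_left (hbr : ∀ U W : v, br U W = -br W U)
    (hJ : ∀ (Z : z) (U W : v), ⟪J Z U, W⟫ = ⟪Z, br U W⟫) (Z : z) (U W : v) :
    ⟪J Z U, W⟫ = -⟪U, J Z W⟫ := by
  rw [hJ, real_inner_comm _ U, hJ, hbr, inner_neg_right]

theorem norm_J_apply_sq (hbr : ∀ U W : v, br U W = -br W U)
    (hJ : ∀ (Z : z) (U W : v), ⟪J Z U, W⟫ = ⟪Z, br U W⟫)
    (hJ2 : ∀ (Z : z) (U : v), J Z (J Z U) = -(‖Z‖ ^ 2) • U) (Z : z) (U : v) :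
    ‖J Z U‖ ^ 2 = ‖Z‖ ^ 2 * ‖U‖ ^ 2 := by
  rw [← real_inner_self_eq_norm_sq, inner_J_apply_left hbr hJ, hJ2, real_inner_smul_right,
    real_inner_self_eq_norm_sq, neg_mul, neg_neg]

theorem inner_J_apply_J_apply (hbr : ∀ U W : v, br U W = -br W U)
    (hJ : ∀ (Z : z) (U W : v), ⟪J Z U, W⟫ = ⟪Z, br U W⟫)
    (hJ2 : ∀ (Z : z) (U : v), J Z (J Z U) = -(‖Z‖ ^ 2) • U) (Z W : z) (U : v) :
    ⟪J Z U, J W U⟫ = ⟪Z, W⟫ * ‖U‖ ^ 2 := by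
  have hpolar := norm_J_apply_sq hbr hJ hJ2 (Z + W) U
  rw [map_add, LinearMap.add_apply, norm_add_sq_real, norm_add_sq_real,
    norm_J_apply_sq hbr hJ hJ2, norm_J_apply_sq hbr hJ hJ2] at hpolar
  linarith

theorem inner_add_J_apply_add_J_apply (hbr : ∀ U W : v, br U W = -br W U)
    (hJ : ∀ (Z : z) (U W : v), ⟪J Z U, W⟫ = ⟪Z, br U W⟫)
    (hJ2 : ∀ (Z : z) (U : v), J Z (J Z U) = -(‖Z‖ ^ 2) • U) {V A B : v} (Z W : z)
    (hA : A ∈ LinearMap.ker (br V)) (hB : B ∈ LinearMap.ker (br V)) :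
    ⟪A + J Z V, B + J W V⟫ = ⟪A, B⟫ + ‖V‖ ^ 2 * ⟪Z, W⟫ := by
  rw [inner_add_left, inner_add_right, inner_add_right, real_inner_comm (J W V),
    inner_J_apply_eq_zero_of_mem_ker hJ _ hA, inner_J_apply_eq_zero_of_mem_ker hJ _ hB,
    inner_J_apply_J_apply hbr hJ hJ2]
  ring

end GeneralizedHeisenberg

theorem stmt_19_general
    {v z : Type*} [NormedAddCommGroup v] [InnerProductSpace ℝ v]
    [NormedAddCommGroup z] [InnerProductSpace ℝ z]
    (br : v →ₗ[ℝ] v →ₗ[ℝ] z)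
    (hbr : ∀ U W : v, br U W = - br W U)
    (J : z →ₗ[ℝ] v →ₗ[ℝ] v)
    (hJ : ∀ (Z : z) (U W : v), ⟪J Z U, W⟫ = ⟪Z, br U W⟫)
    (hJ2 : ∀ (Z : z) (U : v), J Z (J Z U) = -(‖Z‖ ^ 2) • U)
    (V : v) (Y : z)
    (m : ℕ) (e : Fin m → z) (he : Orthonormal ℝ e)
    (Vr : Fin m → v) (Yr : Fin m → z)
    (hVr : ∀ r, Vr r ∈ LinearMap.ker (br V))
    (hdec : ∀ r, J (e r) (J Y V) = Vr r + J (Yr r) V) :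
    (∀ r l, ‖V‖ ^ 2 * ‖Y‖ ^ 2 * (if r = l then 1 else 0) =
      ⟪Vr r, Vr l⟫ + ‖V‖ ^ 2 * ⟪Yr r, Yr l⟫) ∧
    (Matrix.of fun r l => ⟪Vr r, Vr l⟫).PosSemidef ∧
    ((‖V‖ ^ 2 * ‖Y‖ ^ 2) • (1 : Matrix (Fin m) (Fin m) ℝ) -
      Matrix.of fun r l => ⟪Vr r, Vr l⟫).PosSemidef := by
  have hsplit : ∀ r l, ‖V‖ ^ 2 * ‖Y‖ ^ 2 * (if r = l then 1 else 0) =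
      ⟪Vr r, Vr l⟫ + ‖V‖ ^ 2 * ⟪Yr r, Yr l⟫ := by
    intro r l
    have hinner := inner_add_J_apply_add_J_apply hbr hJ hJ2 (Yr r) (Yr l) (hVr r) (hVr l)
    rw [← hdec, ← hdec, inner_J_apply_J_apply hbr hJ hJ2, orthonormal_iff_ite.mp he,
      norm_J_apply_sq hbr hJ hJ2] at hinner
    linear_combination hinner
  refine ⟨hsplit, Matrix.posSemidef_gram ℝ Vr, ?_⟩
  have hgram : (‖V‖ ^ 2 * ‖Y‖ ^ 2) • (1 : Matrix (Fin m) (Fin m) ℝ) -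
      Matrix.of (fun r l => ⟪Vr r, Vr l⟫) = Matrix.gram ℝ fun r => ‖V‖ • Yr r := by
    ext r l
    simp only [Matrix.sub_apply, Matrix.smul_apply, Matrix.one_apply, Matrix.of_apply,
      Matrix.gram_apply, real_inner_smul_left, real_inner_smul_right, smul_eq_mul]
    linear_combination hsplit r l
  exact hgram ▸ Matrix.posSemidef_gram ℝ _

/-- In a generalized Heisenberg algebra `n = v ⊕ z`, fix nonzero `V ∈ v`, `Y ∈ z`
and an orthonormal basis `e` of `z`. Writing `J_{e r} J_Y V = V_r + J_{Y_r} V`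
with `V_r ∈ ker (ad V)`, one has `|V|²|Y|² δ_{rl} = ⟨V_r, V_l⟩ + |V|²⟨Y_r, Y_l⟩`;
consequently the Gram matrix `(⟨V_r, V_l⟩)` is positive semidefinite with all
eigenvalues in `[0, |V|²|Y|²]` (expressed as: `G` and `|V|²|Y|²·I − G` are both
positive semidefinite). -/
theorem stmt_19
    {v z : Type*} [NormedAddCommGroup v] [InnerProductSpace ℝ v]
    [NormedAddCommGroup z] [InnerProductSpace ℝ z]
    (br : v →ₗ[ℝ] v →ₗ[ℝ] z)
    (hbr : ∀ U W : v, br U W = - br W U)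
    (J : z →ₗ[ℝ] v →ₗ[ℝ] v)
    (hJ : ∀ (Z : z) (U W : v), ⟪J Z U, W⟫ = ⟪Z, br U W⟫)
    (hJ2 : ∀ (Z : z) (U : v), J Z (J Z U) = -(‖Z‖ ^ 2) • U)
    (V : v) (hV : V ≠ 0) (Y : z) (hY : Y ≠ 0)
    (m : ℕ) (e : Fin m → z) (he : Orthonormal ℝ e) (hebasis : ⊤ ≤ Submodule.span ℝ (Set.range e))
    (Vr : Fin m → v) (Yr : Fin m → z)
    (hVr : ∀ r, Vr r ∈ LinearMap.ker (br V))
    (hdec : ∀ r, J (e r) (J Y V) = Vr r + J (Yr r) V) :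
    (∀ r l, ‖V‖ ^ 2 * ‖Y‖ ^ 2 * (if r = l then 1 else 0) =
      ⟪Vr r, Vr l⟫ + ‖V‖ ^ 2 * ⟪Yr r, Yr l⟫) ∧
    (Matrix.of fun r l => ⟪Vr r, Vr l⟫).PosSemidef ∧
    ((‖V‖ ^ 2 * ‖Y‖ ^ 2) • (1 : Matrix (Fin m) (Fin m) ℝ) -
      Matrix.of fun r l => ⟪Vr r, Vr l⟫).PosSemidef :=
  stmt_19_general br hbr J hJ hJ2 V Y m e he Vr Yr hVr hdec
end
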